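/- arXiv:math/0401255 — 2 statements merged into one kernel-verified Lean document; each statement's English description precedes it below -/
import Mathlib

section
/- Let 1 < p < ∞ and let a be a real number with a ≠ p - 1. Then for every smooth function u with compact support contained in the open interval (0,∞), one has ∫₀^∞ |u(t)|^p t^{a-p} dt ≤ (p/|p-1-a|)^p ∫₀^∞ |u'(t)|^p t^{a} dt. -/
open MeasureTheory

private lemma hardy_abs_helper {p : ℝ} (hp : 1 < p) (x : ℝ) :
    |x| ^ (p - 2) * |x| = |x| ^ (p - 1) := by
  rcases eq_or_ne x 0 with h | h
  · simp [h, Real.zero_rpow (show p - 1 ≠ 0 by intro h'; linarith)]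
  · rw [show p - 1 = p - 2 + 1 by ring, Real.rpow_add_one (abs_ne_zero.2 h)]

private lemma hardy_kernel_continuous {p : ℝ} (hp : 1 < p) :
    Continuous (fun x : ℝ => p * |x| ^ (p - 2) * x) := by
  have h1 : deriv (fun x : ℝ => |x| ^ p) = fun x => p * |x| ^ (p - 2) * x :=
    funext fun x => (hasDerivAt_abs_rpow x hp).deriv
  have h2 : (fun x : ℝ => ‖x‖ ^ p) = fun x : ℝ => |x| ^ p := by
    funext x; rw [Real.norm_eq_abs]
  have := (contDiff_norm_rpow (E := ℝ) hp).continuous_deriv le_rfl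
  rwa [h2, h1] at this

/-- The classical one-dimensional power-weight Hardy inequality. -/
theorem hardy_one_dimensional (p a : ℝ) (hp : 1 < p) (ha : a ≠ p - 1)
    (u : ℝ → ℝ) (hu : ContDiff ℝ (⊤ : ℕ∞) u) (hsupp : HasCompactSupport u)
    (hsub : tsupport u ⊆ Set.Ioi (0 : ℝ)) :
    ∫ t in Set.Ioi (0 : ℝ), |u t| ^ p * t ^ (a - p) ≤
      (p / |p - 1 - a|) ^ p * ∫ t in Set.Ioi (0 : ℝ), |deriv u t| ^ p * t ^ a := by
  have hp0 : (0:ℝ) < p := lt_trans one_pos hp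
  have hpne : p ≠ 0 := ne_of_gt hp0
  have habs : 0 < |p - 1 - a| := abs_pos.2 (fun h => ha (by linarith))
  set C : ℝ := p / |p - 1 - a| with hCdef
  have hCpos : 0 < C := div_pos hp0 habs
  -- trivial case: u ≡ 0
  by_cases hK : tsupport u = ∅
  · have hu0 : ∀ t, u t = 0 := fun t =>
      image_eq_zero_of_notMem_tsupport (by simp [hK])
    have e1 : (∫ t in Set.Ioi (0:ℝ), |u t| ^ p * t ^ (a - p)) = 0 := by
      apply integral_eq_zero_of_ae
      filter_upwards with t
      simp [hu0 t, Real.zero_rpow hpne]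
    rw [e1]
    have hJnn : 0 ≤ ∫ t in Set.Ioi (0:ℝ), |deriv u t| ^ p * t ^ a :=
      setIntegral_nonneg measurableSet_Ioi fun t ht =>
        mul_nonneg (Real.rpow_nonneg (abs_nonneg _) _)
          (Real.rpow_nonneg (le_of_lt ht) _)
    exact mul_nonneg (Real.rpow_nonneg hCpos.le _) hJnn
  have hKne : (tsupport u).Nonempty := Set.nonempty_iff_ne_empty.2 hK
  set c : ℝ := sInf (tsupport u) with hcdef
  set d : ℝ := sSup (tsupport u) with hddef
  have hcK : c ∈ tsupport u := IsCompact.sInf_mem hsupp hKne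
  have hc : 0 < c := hsub hcK
  have hcd : c ≤ d := csInf_le_csSup hKne (IsCompact.bddBelow hsupp) (IsCompact.bddAbove hsupp)
  set c' : ℝ := c / 2 with hc'def
  set d' : ℝ := d + 1 with hd'def
  have hc' : 0 < c' := by simp only [hc'def]; linarith
  have hcc' : c' < c := by simp only [hc'def]; linarith
  have hdd' : d < d' := by simp only [hd'def]; linarith
  have hc'd' : c' ≤ d' := by linarith
  set s : Set ℝ := Set.Ioc c' d' with hsdef
  have hsubIcc : tsupport u ⊆ Set.Icc c d := fun x hx =>
    ⟨csInf_le (IsCompact.bddBelow hsupp) hx, le_csSup (IsCompact.bddAbove hsupp) hx⟩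
  have huz : ∀ t, t ∉ Set.Icc c d → u t = 0 := fun t ht =>
    image_eq_zero_of_notMem_tsupport fun h => ht (hsubIcc h)
  have hu'z : ∀ t, t ∉ Set.Icc c d → deriv u t = 0 := by
    intro t ht
    by_contra h
    exact ht (hsubIcc (support_deriv_subset (a := t) h))
  have hucont : Continuous u := hu.continuous
  have hu'cont : Continuous (deriv u) := hu.continuous_deriv (by simp)
  have hdiff : ∀ t, HasDerivAt u (deriv u t) t := fun t =>
    ((hu.differentiable (by simp)) t).hasDerivAt
  -- reduce integrals over Ioi 0 to integrals over s
  have hIccSub : Set.Icc c d ⊆ s := fun x hx =>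
    ⟨lt_of_lt_of_le hcc' hx.1, le_trans hx.2 (le_of_lt hdd')⟩
  have hred : ∀ f : ℝ → ℝ, (∀ t, t ∉ Set.Icc c d → f t = 0) →
      (∫ t in Set.Ioi (0:ℝ), f t) = ∫ t in s, f t := by
    intro f hf
    have h1 := setIntegral_eq_integral_of_forall_compl_eq_zero (μ := volume)
      (s := Set.Ioi (0:ℝ)) (f := f) (fun t ht => hf t fun hm => ht (lt_of_lt_of_le hc hm.1))
    have h2 := setIntegral_eq_integral_of_forall_compl_eq_zero (μ := volume)
      (s := Set.Ioc c' d') (f := f) (fun t ht => hf t fun hm => ht (hIccSub hm))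
    rw [hsdef]
    rw [h1, h2]
  have e1 : (∫ t in Set.Ioi (0:ℝ), |u t| ^ p * t ^ (a - p))
      = ∫ t in s, |u t| ^ p * t ^ (a - p) := by
    apply hred
    intro t ht
    rw [huz t ht, abs_zero, Real.zero_rpow hpne, zero_mul]
  have e2 : (∫ t in Set.Ioi (0:ℝ), |deriv u t| ^ p * t ^ a)
      = ∫ t in s, |deriv u t| ^ p * t ^ a := by
    apply hred
    intro t ht
    rw [hu'z t ht, abs_zero, Real.zero_rpow hpne, zero_mul]
  rw [e1, e2]
  -- notation
  set I : ℝ := ∫ t in s, |u t| ^ p * t ^ (a - p) with hIdef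
  set J : ℝ := ∫ t in s, |deriv u t| ^ p * t ^ a with hJdef
  set H : ℝ := ∫ t in s, (|u t| ^ (p - 1) * |deriv u t|) * t ^ (a - p + 1) with hHdef
  set T : Set ℝ := Set.Icc c' d' with hTdef
  have hT : IsCompact T := isCompact_Icc
  have hTpos : ∀ t ∈ T, (0:ℝ) < t := fun t ht => lt_of_lt_of_le hc' ht.1
  have huIcc : Set.uIcc c' d' = T := Set.uIcc_of_le hc'd'
  have hrw : ∀ e : ℝ, ContinuousOn (fun t : ℝ => t ^ e) T := fun e t ht =>
    (Real.continuousAt_rpow_const t e (Or.inl (ne_of_gt (hTpos t ht)))).continuousWithinAt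
  have habsu : ∀ r : ℝ, 0 ≤ r → Continuous (fun t => |u t| ^ r) := fun r hr =>
    (Real.continuous_rpow_const hr).comp (continuous_abs.comp hucont)
  have habsu' : ∀ r : ℝ, 0 ≤ r → Continuous (fun t => |deriv u t| ^ r) := fun r hr =>
    (Real.continuous_rpow_const hr).comp (continuous_abs.comp hu'cont)
  -- nonnegativity
  have hInn : 0 ≤ I :=
    setIntegral_nonneg measurableSet_Ioc fun t ht =>
      mul_nonneg (Real.rpow_nonneg (abs_nonneg _) _)
        (Real.rpow_nonneg (le_of_lt (lt_trans hc' ht.1)) _)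
  have hJnn : 0 ≤ J :=
    setIntegral_nonneg measurableSet_Ioc fun t ht =>
      mul_nonneg (Real.rpow_nonneg (abs_nonneg _) _)
        (Real.rpow_nonneg (le_of_lt (lt_trans hc' ht.1)) _)
  -- integration by parts
  set G : ℝ → ℝ := fun t => p * |u t| ^ (p - 2) * u t * deriv u t with hGdef
  have hG : ∀ t, HasDerivAt (fun t => |u t| ^ p) (G t) t := by
    intro t
    have h := (hasDerivAt_abs_rpow (u t) hp).comp t (hdiff t)
    exact h
  have hGcont : Continuous G := by
    have : G = fun t => (fun x : ℝ => p * |x| ^ (p - 2) * x) (u t) * deriv u t := rfl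
    rw [this]
    exact ((hardy_kernel_continuous hp).comp hucont).mul hu'cont
  set V : ℝ → ℝ := fun t => t ^ (a - p + 1) / (a - p + 1) with hVdef
  have hne : a - p + 1 ≠ 0 := fun h => ha (by linarith)
  have hV : ∀ t ∈ Set.uIcc c' d', HasDerivAt V (t ^ (a - p)) t := by
    intro t ht
    rw [huIcc] at ht
    have ht0 : t ≠ 0 := ne_of_gt (hTpos t ht)
    have h1 := (Real.hasDerivAt_rpow_const (p := a - p + 1) (Or.inl ht0)).div_const (a - p + 1)
    refine h1.congr_deriv ?_
    rw [show a - p + 1 - 1 = a - p by ring]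
    field_simp
  have hVcont : ContinuousOn V T := (hrw (a - p + 1)).div_const _
  have hGint : IntervalIntegrable G volume c' d' := hGcont.intervalIntegrable _ _
  have hVint : IntervalIntegrable (fun t : ℝ => t ^ (a - p)) volume c' d' :=
    (huIcc ▸ hrw (a - p)).intervalIntegrable
  have hIBP := intervalIntegral.integral_mul_deriv_eq_deriv_mul
    (fun x _ => hG x) hV hGint hVint
  have hbc : u c' = 0 := huz c' fun h => absurd h.1 (not_le.2 hcc')
  have hbd : u d' = 0 := huz d' fun h => absurd h.2 (not_le.2 hdd')
  have hIeq : (∫ t in c'..d', |u t| ^ p * t ^ (a - p)) = - ∫ t in c'..d', G t * V t := by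
    rw [hIBP, hbc, hbd, abs_zero, Real.zero_rpow hpne, zero_mul, zero_mul, sub_zero, zero_sub]
  -- pointwise bound |G t * V t| ≤ C * ((|u t|^(p-1) * |deriv u t|) * t^(a-p+1))
  have hptw : ∀ t ∈ T, |G t * V t| ≤ C * ((|u t| ^ (p - 1) * |deriv u t|) * t ^ (a - p + 1)) := by
    intro t ht
    have ht0 : (0:ℝ) < t := hTpos t ht
    have hGt : |G t| = p * (|u t| ^ (p - 1) * |deriv u t|) := by
      simp only [hGdef]
      rw [abs_mul, abs_mul, abs_mul, abs_of_pos hp0,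
        abs_of_nonneg (Real.rpow_nonneg (abs_nonneg (u t)) _), mul_assoc p,
        hardy_abs_helper hp (u t)]
      ring
    have hVt : |V t| = t ^ (a - p + 1) / |p - 1 - a| := by
      rw [hVdef]
      rw [abs_div, abs_of_nonneg (Real.rpow_nonneg ht0.le _),
        show |a - p + 1| = |p - 1 - a| by rw [show a - p + 1 = -(p - 1 - a) by ring, abs_neg]]
    rw [abs_mul, hGt, hVt, hCdef]
    apply le_of_eq
    field_simp
  -- key inequality : I ≤ C * H
  have hIs : I = ∫ t in c'..d', |u t| ^ p * t ^ (a - p) := by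
    rw [hIdef, intervalIntegral.integral_of_le hc'd']
  have hHs : H = ∫ t in c'..d', (|u t| ^ (p - 1) * |deriv u t|) * t ^ (a - p + 1) := by
    rw [hHdef, intervalIntegral.integral_of_le hc'd']
  have hGVint : IntervalIntegrable (fun t => |G t * V t|) volume c' d' := by
    apply ContinuousOn.intervalIntegrable
    rw [huIcc]
    exact ((hGcont.continuousOn).mul hVcont).abs
  have hRHScont : ContinuousOn
      (fun t => C * ((|u t| ^ (p - 1) * |deriv u t|) * t ^ (a - p + 1))) T :=
    (continuousOn_const.mul
      ((((habsu (p - 1) (by linarith)).mul (continuous_abs.comp hu'cont)).continuousOn).mul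
        (hrw (a - p + 1))))
  have hRHSint : IntervalIntegrable
      (fun t => C * ((|u t| ^ (p - 1) * |deriv u t|) * t ^ (a - p + 1))) volume c' d' :=
    (huIcc ▸ hRHScont).intervalIntegrable
  have hIH : I ≤ C * H := by
    rw [hIs, hHs, hIeq]
    calc (- ∫ t in c'..d', G t * V t) ≤ |∫ t in c'..d', G t * V t| := neg_le_abs _
      _ ≤ ∫ t in c'..d', |G t * V t| :=
          intervalIntegral.abs_integral_le_integral_abs hc'd'
      _ ≤ ∫ t in c'..d', C * ((|u t| ^ (p - 1) * |deriv u t|) * t ^ (a - p + 1)) :=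
          intervalIntegral.integral_mono_on hc'd' hGVint hRHSint hptw
      _ = C * ∫ t in c'..d', (|u t| ^ (p - 1) * |deriv u t|) * t ^ (a - p + 1) :=
          intervalIntegral.integral_const_mul _ _
  -- Hölder
  set q : ℝ := p / (p - 1) with hqdef
  have hp1 : (0:ℝ) < p - 1 := by linarith
  have hq : q.HolderConjugate p := by
    rw [Real.holderConjugate_iff]
    constructor
    · rw [hqdef, lt_div_iff₀ hp1]; linarith
    · rw [hqdef]; field_simp; ring
  have hq0 : 0 < q := by rw [hqdef]; positivity
  set F : ℝ → ℝ := fun t => |u t| ^ (p - 1) * t ^ ((a - p) / q) with hFdef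
  set G₂ : ℝ → ℝ := fun t => |deriv u t| * t ^ (a / p) with hG₂def
  haveI : IsFiniteMeasure (volume.restrict s) :=
    ⟨by rw [Measure.restrict_apply_univ]; exact measure_Ioc_lt_top⟩
  have hFcont : ContinuousOn F T := ((habsu (p - 1) hp1.le).continuousOn).mul (hrw _)
  have hG₂cont : ContinuousOn G₂ T := ((continuous_abs.comp hu'cont).continuousOn).mul (hrw _)
  have hmem : ∀ (f : ℝ → ℝ), ContinuousOn f T → ∀ r : ℝ,
      MemLp f (ENNReal.ofReal r) (volume.restrict s) := by
    intro f hf r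
    obtain ⟨Cf, hCf⟩ := hT.exists_bound_of_continuousOn hf
    refine MemLp.of_bound ((hf.mono Set.Ioc_subset_Icc_self).aestronglyMeasurable
      measurableSet_Ioc) Cf ?_
    filter_upwards [ae_restrict_mem measurableSet_Ioc] with t ht
    exact hCf t (Set.Ioc_subset_Icc_self ht)
  have hFnn : 0 ≤ᵐ[volume.restrict s] F := by
    filter_upwards [ae_restrict_mem measurableSet_Ioc] with t ht
    exact mul_nonneg (Real.rpow_nonneg (abs_nonneg _) _)
      (Real.rpow_nonneg (le_of_lt (lt_trans hc' ht.1)) _)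
  have hG₂nn : 0 ≤ᵐ[volume.restrict s] G₂ := by
    filter_upwards [ae_restrict_mem measurableSet_Ioc] with t ht
    exact mul_nonneg (abs_nonneg _)
      (Real.rpow_nonneg (le_of_lt (lt_trans hc' ht.1)) _)
  have hHolder := integral_mul_le_Lp_mul_Lq_of_nonneg hq hFnn hG₂nn
    (hmem F hFcont q) (hmem G₂ hG₂cont p)
  -- identifyterms
  have hFG : (∫ t in s, F t * G₂ t) = H := by
    rw [hHdef]
    apply setIntegral_congr_fun measurableSet_Ioc
    intro t ht
    have ht0 : (0:ℝ) < t := lt_trans hc' ht.1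
    simp only [hFdef, hG₂def]
    rw [show |u t| ^ (p - 1) * t ^ ((a - p) / q) * (|deriv u t| * t ^ (a / p))
        = (|u t| ^ (p - 1) * |deriv u t|) * (t ^ ((a - p) / q) * t ^ (a / p)) by ring,
      ← Real.rpow_add ht0]
    congr 2
    rw [hqdef]
    field_simp
    ring
  have hFq : (∫ t in s, F t ^ q) = I := by
    rw [hIdef]
    apply setIntegral_congr_fun measurableSet_Ioc
    intro t ht
    have ht0 : (0:ℝ) < t := lt_trans hc' ht.1
    simp only [hFdef]
    rw [Real.mul_rpow (Real.rpow_nonneg (abs_nonneg _) _) (Real.rpow_nonneg ht0.le _),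
      ← Real.rpow_mul (abs_nonneg _), ← Real.rpow_mul ht0.le,
      div_mul_cancel₀ _ (ne_of_gt hq0)]
    congr 2
    rw [hqdef]
    field_simp
  have hG₂p : (∫ t in s, G₂ t ^ p) = J := by
    rw [hJdef]
    apply setIntegral_congr_fun measurableSet_Ioc
    intro t ht
    have ht0 : (0:ℝ) < t := lt_trans hc' ht.1
    simp only [hG₂def]
    rw [Real.mul_rpow (abs_nonneg _) (Real.rpow_nonneg ht0.le _),
      ← Real.rpow_mul ht0.le, div_mul_cancel₀ _ hpne]
  rw [hFG, hFq, hG₂p] at hHolder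
  -- final algebra
  rcases eq_or_lt_of_le hInn with h0 | hIpos
  · rw [← h0]
    exact mul_nonneg (Real.rpow_nonneg hCpos.le _) hJnn
  · have h5 : I ≤ C * (I ^ (1 / q) * J ^ (1 / p)) :=
      le_trans hIH (mul_le_mul_of_nonneg_left hHolder hCpos.le)
    have hsplit : I = I ^ (1 / q) * I ^ (1 / p) := by
      rw [← Real.rpow_add hIpos, one_div, one_div, hq.inv_add_inv_eq_one, Real.rpow_one]
    have hq1 : 0 < I ^ (1 / q) := Real.rpow_pos_of_pos hIpos _
    have h6 : I ^ (1 / p) ≤ C * J ^ (1 / p) := by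
      have h7 : I ^ (1 / q) * I ^ (1 / p) ≤ I ^ (1 / q) * (C * J ^ (1 / p)) := by
        calc I ^ (1 / q) * I ^ (1 / p) = I := hsplit.symm
          _ ≤ C * (I ^ (1 / q) * J ^ (1 / p)) := h5
          _ = I ^ (1 / q) * (C * J ^ (1 / p)) := by ring
      exact le_of_mul_le_mul_left h7 hq1
    calc I = (I ^ (1 / p)) ^ p := by
          rw [← Real.rpow_mul hIpos.le, one_div_mul_cancel hpne, Real.rpow_one]
      _ ≤ (C * J ^ (1 / p)) ^ p :=
          Real.rpow_le_rpow (Real.rpow_nonneg hInn _) h6 hp0.le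
      _ = C ^ p * J := by
          rw [Real.mul_rpow hCpos.le (Real.rpow_nonneg hJnn _),
            ← Real.rpow_mul hJnn, one_div_mul_cancel hpne, Real.rpow_one]
end

section
/- Let N ≥ 1 and p > N, and let Ω ⊆ ℝ^N be a nonempty open set with Ω ≠ ℝ^N. Then there exists a constant C, depending only on N and p, such that for every u ∈ C_c^∞(Ω) (extended by zero to all of ℝ^N) and every x ∈ Ω, |u(x)| ≤ C δ(x)^{1 - N/p} ( ∫_{B(x, 2δ(x))} |∇u(y)|^p dy )^{1/p}, where B(x, r) denotes the open Euclidean ball of radius r about x and ∇u is extended by zero outside Ω. -/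
open MeasureTheory Metric Set
open scoped Pointwise

variable {n : ℕ}

local notation "E" => EuclideanSpace ℝ (Fin (n+1))

-- L1: FTC along the segment
lemma seg_bound (u : E → ℝ) (hu : ContDiff ℝ (⊤ : ℕ∞) u) (a w : EuclideanSpace ℝ (Fin (n+1))) :
    |u a - u w| ≤ ‖w - a‖ * ∫ t in Ioc (0:ℝ) 1, ‖fderiv ℝ u (a + t • (w - a))‖ := by
  have hγ : ∀ t : ℝ, HasDerivAt (fun t : ℝ => a + t • (w - a)) (w - a) t := by
    intro t
    simpa using ((hasDerivAt_id t).smul_const (w - a)).const_add a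
  have hγc : Continuous (fun t : ℝ => a + t • (w - a)) := by continuity
  have hFc : Continuous (fun t : ℝ => (fderiv ℝ u (a + t • (w - a))) (w - a)) :=
    ((hu.continuous_fderiv (by simp)).comp hγc).clm_apply continuous_const
  have hder : ∀ t ∈ Set.uIcc (0:ℝ) 1, HasDerivAt (fun t => u (a + t • (w - a)))
      ((fderiv ℝ u (a + t • (w - a))) (w - a)) t := fun t _ =>
    ((hu.differentiable (by simp) _).hasFDerivAt).comp_hasDerivAt t (hγ t)
  have hFTC := intervalIntegral.integral_eq_sub_of_hasDerivAt hder
    (hFc.intervalIntegrable 0 1)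
  have h1 : u w - u a = ∫ t in (0:ℝ)..1, (fderiv ℝ u (a + t • (w - a))) (w - a) := by
    simpa using hFTC.symm
  have h2 : |u a - u w| ≤ ∫ t in (0:ℝ)..1, ‖(fderiv ℝ u (a + t • (w - a))) (w - a)‖ := by
    rw [abs_sub_comm, ← Real.norm_eq_abs, h1]
    exact intervalIntegral.norm_integral_le_integral_norm zero_le_one
  have h3 : (∫ t in (0:ℝ)..1, ‖(fderiv ℝ u (a + t • (w - a))) (w - a)‖)
      ≤ ∫ t in (0:ℝ)..1, ‖fderiv ℝ u (a + t • (w - a))‖ * ‖w - a‖ := by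
    apply intervalIntegral.integral_mono_on zero_le_one (hFc.norm.intervalIntegrable 0 1)
      ((((hu.continuous_fderiv (by simp)).comp hγc).norm.mul continuous_const).intervalIntegrable 0 1)
    intro t _
    exact ContinuousLinearMap.le_opNorm _ _
  have h4 : (∫ t in (0:ℝ)..1, ‖fderiv ℝ u (a + t • (w - a))‖ * ‖w - a‖)
      = ‖w - a‖ * ∫ t in Ioc (0:ℝ) 1, ‖fderiv ℝ u (a + t • (w - a))‖ := by
    rw [intervalIntegral.integral_mul_const, mul_comm,
      intervalIntegral.integral_of_le zero_le_one]
  calc |u a - u w| ≤ _ := h2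
    _ ≤ _ := h3
    _ = _ := h4


lemma setIntegral_comp_add_left'' (f : EuclideanSpace ℝ (Fin (n+1)) → ℝ)
    (b : EuclideanSpace ℝ (Fin (n+1))) (s : Set (EuclideanSpace ℝ (Fin (n+1))))
    (hs : MeasurableSet s) (hs' : MeasurableSet (b +ᵥ s)) :
    ∫ y in s, f (b + y) = ∫ y in b +ᵥ s, f y := by
  rw [← integral_indicator hs, ← integral_indicator hs',
    ← integral_add_left_eq_self (fun y => Set.indicator (b +ᵥ s) f y) b]
  congr 1
  funext y
  have hmem : b + y ∈ b +ᵥ s ↔ y ∈ s := Set.vadd_mem_vadd_set_iff (a := b) (s := s) (x := y)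
  by_cases hy : y ∈ s
  · rw [Set.indicator_of_mem hy, Set.indicator_of_mem (hmem.mpr hy)]
  · rw [Set.indicator_of_notMem hy, Set.indicator_of_notMem (fun h => hy (hmem.mp h))]

lemma scaled_bound (p : ℝ) (hp : ((n:ℝ)+1) < p)
    (F : EuclideanSpace ℝ (Fin (n+1)) → ℝ) (hF : Continuous F)
    (hFc : HasCompactSupport F) (hFnn : ∀ y, 0 ≤ F y)
    (c a : EuclideanSpace ℝ (Fin (n+1))) (R : ℝ) (hR : 0 < R) (hac : dist a c ≤ R)
    {t : ℝ} (ht : t ∈ Ioc (0:ℝ) 1) :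
    ∫ w in ball c R, F (a + t • (w - a)) ≤
      t ^ (-(((n:ℝ)+1)/p)) * ((volume (ball c R)).toReal) ^ (1 - 1/p) *
        (∫ y in ball c R, F y ^ p) ^ (1/p) := by
  have hN : (0:ℝ) < (n:ℝ)+1 := by positivity
  have hp1 : (1:ℝ) < p := lt_of_le_of_lt (by simp [le_add_iff_nonneg_left]) hp
  have hp0 : (0:ℝ) < p := lt_trans zero_lt_one hp1
  set b : EuclideanSpace ℝ (Fin (n+1)) := a - t • a with hb
  have hab : ∀ w : EuclideanSpace ℝ (Fin (n+1)), a + t • (w - a) = b + t • w := by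
    intro w; rw [hb]; module
  have htN : (0:ℝ) < t ^ (n+1) := pow_pos ht.1 _
  -- scaling step
  have step1 : ∫ w in ball c R, F (a + t • (w - a)) ∂volume
      = (t ^ (n+1))⁻¹ • ∫ y in t • ball c R, F (b + y) ∂volume := by
    simp_rw [hab]
    have := MeasureTheory.Measure.setIntegral_comp_smul_of_pos volume
        (fun y => F (b + y)) (ball c R) ht.1
    simp only [finrank_euclideanSpace_fin] at this
    exact this
  have hmeas1 : MeasurableSet (t • ball c R) :=
    ((isOpen_ball).smul₀ (ne_of_gt ht.1)).measurableSet
  have hmeas2 : MeasurableSet (b +ᵥ t • ball c R) :=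
    (((isOpen_ball).smul₀ (ne_of_gt ht.1)).vadd b).measurableSet
  have step2 : ∫ y in t • ball c R, F (b + y) ∂volume
      = ∫ y in b +ᵥ t • ball c R, F y ∂volume :=
    setIntegral_comp_add_left'' F b _ hmeas1 hmeas2
  -- the translated-scaled ball is inside the original ball
  have hsub : b +ᵥ t • ball c R ⊆ ball c R := by
    rintro y ⟨z, ⟨w, hw, rfl⟩, rfl⟩
    have hyc : (b +ᵥ t • w) - c = (1-t) • (a - c) + t • (w - c) := by
      rw [hb]; show (a - t • a) + t • w - c = _; module
    rw [mem_ball, dist_eq_norm] at hw ⊢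
    rw [hyc]
    calc ‖(1-t) • (a - c) + t • (w - c)‖ ≤ ‖(1-t) • (a - c)‖ + ‖t • (w - c)‖ :=
          norm_add_le _ _
      _ = (1-t) * ‖a - c‖ + t * ‖w - c‖ := by
          rw [norm_smul, norm_smul, Real.norm_eq_abs, Real.norm_eq_abs,
            abs_of_nonneg (by linarith [ht.2] : (0:ℝ) ≤ 1 - t), abs_of_pos ht.1]
      _ < R := by
          have h1 : (1-t) * ‖a - c‖ ≤ (1-t) * R := by
            apply mul_le_mul_of_nonneg_left _ (by linarith [ht.2])
            rwa [dist_eq_norm] at hac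
          have h2 : t * ‖w - c‖ < t * R := by
            exact mul_lt_mul_of_pos_left hw ht.1
          linarith
  -- finiteness
  set S := b +ᵥ t • ball c R with hS
  have hSfin : volume S < ⊤ :=
    lt_of_le_of_lt (measure_mono hsub) measure_ball_lt_top
  haveI : IsFiniteMeasure (volume.restrict S) :=
    ⟨by rwa [Measure.restrict_apply_univ]⟩
  -- Hölder
  set q : ℝ := p / (p - 1) with hq
  have hpq : p.HolderConjugate q := Real.HolderConjugate.conjExponent hp1
  have hFmem : MemLp F (ENNReal.ofReal p) (volume.restrict S) :=
    (hF.memLp_of_hasCompactSupport hFc).restrict _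
  have h1mem : MemLp (fun _ : EuclideanSpace ℝ (Fin (n+1)) => (1:ℝ))
      (ENNReal.ofReal q) (volume.restrict S) := memLp_const 1
  have hold := MeasureTheory.integral_mul_le_Lp_mul_Lq_of_nonneg hpq
    (Filter.Eventually.of_forall hFnn) (Filter.Eventually.of_forall (fun _ => zero_le_one))
    hFmem h1mem
  simp only [mul_one, Real.one_rpow, integral_const, Measure.restrict_apply_univ,
    smul_eq_mul, measureReal_restrict_apply_univ, Measure.real] at hold
  -- volume of S
  have hvolS : (volume S).toReal = t ^ (n+1) * (volume (ball c R)).toReal := by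
    rw [hS, measure_vadd, Measure.addHaar_smul, finrank_euclideanSpace_fin,
      ENNReal.toReal_mul, ENNReal.toReal_ofReal (abs_nonneg _),
      abs_of_pos htN]
  -- F^p integrable on the big ball
  have hFpc : Continuous (fun y => F y ^ p) :=
    hF.rpow_const (fun x => Or.inr (le_of_lt hp0))
  have hFpcs : HasCompactSupport (fun y => F y ^ p) :=
    hFc.comp_left (g := fun v : ℝ => v ^ p) (Real.zero_rpow (ne_of_gt hp0))
  have hFpint : IntegrableOn (fun y => F y ^ p) (ball c R) volume :=
    (hFpc.integrable_of_hasCompactSupport hFpcs).integrableOn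
  have hIp : ∫ y in S, F y ^ p ∂volume ≤ ∫ y in ball c R, F y ^ p ∂volume :=
    setIntegral_mono_set hFpint
      (Filter.Eventually.of_forall (fun y => Real.rpow_nonneg (hFnn y) p))
      (HasSubset.Subset.eventuallyLE hsub)
  have hInn : (0:ℝ) ≤ ∫ y in S, F y ^ p ∂volume :=
    setIntegral_nonneg hmeas2 (fun y _ => Real.rpow_nonneg (hFnn y) p)
  have hIq : ((volume S).toReal) ^ (1/q) =
      (t ^ (n+1) * (volume (ball c R)).toReal) ^ (1/q) := by rw [hvolS]
  -- combine Hölder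
  have hmain : ∫ y in S, F y ∂volume ≤
      (∫ y in ball c R, F y ^ p ∂volume) ^ (1/p) *
        (t ^ (n+1) * (volume (ball c R)).toReal) ^ (1/q) := by
    refine le_trans hold ?_
    rw [← hIq]
    apply mul_le_mul_of_nonneg_right _ (Real.rpow_nonneg ENNReal.toReal_nonneg _)
    exact Real.rpow_le_rpow hInn hIp (by positivity)
  -- exponent algebra
  have h1q' : 1/q = 1 - 1/p := by
    rw [hq, one_div_div, sub_div, div_self (ne_of_gt hp0), one_div]
  set MB : ℝ := (volume (ball c R)).toReal with hMB
  have hMBnn : (0:ℝ) ≤ MB := ENNReal.toReal_nonneg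
  have key2 : (t ^ (n+1) : ℝ)⁻¹ * (t ^ (n+1) * MB) ^ (1 - 1/p)
      = t ^ (-(((n:ℝ)+1)/p)) * MB ^ (1 - 1/p) := by
    rw [Real.mul_rpow htN.le hMBnn]
    have : (t ^ (n+1) : ℝ)⁻¹ * (t ^ (n+1) : ℝ) ^ (1 - 1/p) = t ^ (-(((n:ℝ)+1)/p)) := by
      rw [← Real.rpow_natCast t (n+1), ← Real.rpow_neg_one (t ^ (((n+1:ℕ)):ℝ) : ℝ),
        ← Real.rpow_mul ht.1.le, ← Real.rpow_mul ht.1.le, ← Real.rpow_add ht.1]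
      congr 1
      push_cast
      ring
    rw [← mul_assoc, this]
  calc ∫ w in ball c R, F (a + t • (w - a)) ∂volume
      = (t ^ (n+1) : ℝ)⁻¹ * ∫ y in S, F y ∂volume := by
        rw [step1, step2, smul_eq_mul]
    _ ≤ (t ^ (n+1) : ℝ)⁻¹ * ((∫ y in ball c R, F y ^ p ∂volume) ^ (1/p) *
          (t ^ (n+1) * MB) ^ (1/q)) :=
        mul_le_mul_of_nonneg_left hmain (inv_nonneg.2 htN.le)
    _ = ((t ^ (n+1) : ℝ)⁻¹ * (t ^ (n+1) * MB) ^ (1 - 1/p)) *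
          (∫ y in ball c R, F y ^ p ∂volume) ^ (1/p) := by rw [h1q']; ring
    _ = _ := by rw [key2]

lemma key_avg (p : ℝ) (hp : ((n:ℝ)+1) < p)
    (u : EuclideanSpace ℝ (Fin (n+1)) → ℝ) (hu : ContDiff ℝ (⊤ : ℕ∞) u)
    (hcs : HasCompactSupport u)
    (c a : EuclideanSpace ℝ (Fin (n+1))) (R : ℝ) (hR : 0 < R) (hac : dist a c ≤ R) :
    ∫ w in ball c R, |u a - u w| ≤
      2 * R * (1 - ((n:ℝ)+1)/p)⁻¹ * ((volume (ball c R)).toReal) ^ (1 - 1/p) *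
        (∫ y in ball c R, ‖fderiv ℝ u y‖ ^ p) ^ (1/p) := by
  have hp1 : (1:ℝ) < p := lt_of_le_of_lt (by simp [le_add_iff_nonneg_left]) hp
  have hp0 : (0:ℝ) < p := lt_trans zero_lt_one hp1
  set F : EuclideanSpace ℝ (Fin (n+1)) → ℝ := fun y => ‖fderiv ℝ u y‖ with hFdef
  have hF : Continuous F := (hu.continuous_fderiv (by simp)).norm
  have hFc : HasCompactSupport F := (hcs.fderiv ℝ).norm
  have hFnn : ∀ y, 0 ≤ F y := fun y => norm_nonneg _
  obtain ⟨M, hM⟩ := hFc.exists_bound_of_continuous hF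
  set μ := volume.restrict (ball c R) with hμ
  set ν := volume.restrict (Ioc (0:ℝ) 1) with hν
  haveI : IsFiniteMeasure μ := ⟨by
    rw [hμ, Measure.restrict_apply_univ]; exact measure_ball_lt_top⟩
  haveI : IsFiniteMeasure ν := ⟨by
    rw [hν, Measure.restrict_apply_univ]
    exact lt_of_le_of_lt (measure_mono Ioc_subset_Icc_self)
      (by simp [Real.volume_Icc])⟩
  set g : EuclideanSpace ℝ (Fin (n+1)) × ℝ → ℝ := fun z => F (a + z.2 • (z.1 - a)) with hg
  have hgc : Continuous g := by
    apply hF.comp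
    exact continuous_const.add ((continuous_snd).smul (continuous_fst.sub continuous_const))
  have hgint : Integrable g (μ.prod ν) := by
    refine Integrable.mono' (integrable_const M) hgc.aestronglyMeasurable
      (Filter.Eventually.of_forall fun z => ?_)
    exact hM _
  -- pointwise bound for w in the ball
  have hptwise : ∀ w ∈ ball c R, |u a - u w| ≤
      2 * R * ∫ t in Ioc (0:ℝ) 1, F (a + t • (w - a)) := by
    intro w hw
    have h2R : ‖w - a‖ ≤ 2 * R := by
      have h1 : dist w a ≤ dist w c + dist c a := dist_triangle _ _ _
      have h2 : dist w c < R := mem_ball.mp hw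
      have h3 : dist c a ≤ R := by rwa [dist_comm]
      rw [← dist_eq_norm]
      linarith
    have hTnn : 0 ≤ ∫ t in Ioc (0:ℝ) 1, F (a + t • (w - a)) :=
      setIntegral_nonneg measurableSet_Ioc fun t _ => hFnn _
    calc |u a - u w| ≤ ‖w - a‖ * ∫ t in Ioc (0:ℝ) 1, F (a + t • (w - a)) :=
          seg_bound u hu a w
      _ ≤ 2 * R * ∫ t in Ioc (0:ℝ) 1, F (a + t • (w - a)) :=
          mul_le_mul_of_nonneg_right h2R hTnn
  -- integrate the pointwise bound
  have hLHSint : IntegrableOn (fun w => |u a - u w|) (ball c R) volume := by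
    obtain ⟨Mu, hMu⟩ := hcs.exists_bound_of_continuous hu.continuous
    refine Integrable.mono' (integrable_const (|u a| + Mu))
      ((continuous_const.sub hu.continuous).abs.aestronglyMeasurable)
      (Filter.Eventually.of_forall fun w => ?_)
    have := hMu w
    simp only [Real.norm_eq_abs, abs_abs] at this ⊢
    calc |u a - u w| ≤ |u a| + |u w| := abs_sub _ _
      _ ≤ |u a| + Mu := by linarith
  have hRHSint : Integrable (fun w => 2 * R * ∫ t, g (w, t) ∂ν) μ :=
    (hgint.integral_prod_left).const_mul _
  have step1 : ∫ w in ball c R, |u a - u w| ≤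
      ∫ w in ball c R, 2 * R * ∫ t in Ioc (0:ℝ) 1, F (a + t • (w - a)) :=
    setIntegral_mono_on hLHSint hRHSint measurableSet_ball hptwise
  set I : ℝ := ∫ y in ball c R, ‖fderiv ℝ u y‖ ^ p with hI
  set MB : ℝ := (volume (ball c R)).toReal with hMB
  set K : ℝ := MB ^ (1 - 1/p) * I ^ (1/p) with hK
  have hKnn : 0 ≤ K := by
    apply mul_nonneg (Real.rpow_nonneg ENNReal.toReal_nonneg _)
      (Real.rpow_nonneg ?_ _)
    exact setIntegral_nonneg measurableSet_ball fun y _ => Real.rpow_nonneg (norm_nonneg _) _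
  have hr : (-1:ℝ) < -(((n:ℝ)+1)/p) := by
    have : ((n:ℝ)+1)/p < 1 := (div_lt_one hp0).mpr hp
    linarith
  have hswap : ∫ w, (∫ t, g (w, t) ∂ν) ∂μ = ∫ t, (∫ w, g (w, t) ∂μ) ∂ν :=
    integral_integral_swap hgint
  have hhint : IntegrableOn (fun t : ℝ => t ^ (-(((n:ℝ)+1)/p)) * K) (Ioc (0:ℝ) 1) volume := by
    have h1 : IntervalIntegrable (fun t : ℝ => t ^ (-(((n:ℝ)+1)/p))) volume 0 1 :=
      intervalIntegral.intervalIntegrable_rpow' hr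
    exact ((intervalIntegrable_iff_integrableOn_Ioc_of_le zero_le_one).mp h1).mul_const K
  have step2 : ∫ t, (∫ w, g (w, t) ∂μ) ∂ν ≤
      ∫ t in Ioc (0:ℝ) 1, t ^ (-(((n:ℝ)+1)/p)) * K := by
    refine setIntegral_mono_on hgint.integral_prod_right hhint measurableSet_Ioc ?_
    intro t ht
    have := scaled_bound p hp F hF hFc hFnn c a R hR hac ht
    rw [hK, ← mul_assoc]
    exact this
  have step3 : ∫ t in Ioc (0:ℝ) 1, t ^ (-(((n:ℝ)+1)/p)) * K =
      (1 - ((n:ℝ)+1)/p)⁻¹ * K := by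
    rw [integral_mul_const]
    congr 1
    rw [← intervalIntegral.integral_of_le zero_le_one, integral_rpow (Or.inl hr)]
    rw [Real.one_rpow, Real.zero_rpow (by linarith : -(((n:ℝ)+1)/p) + 1 ≠ 0)]
    rw [neg_add_eq_sub, ← one_div]
    ring_nf
  calc ∫ w in ball c R, |u a - u w| ≤
        ∫ w in ball c R, 2 * R * ∫ t in Ioc (0:ℝ) 1, F (a + t • (w - a)) := step1
    _ = 2 * R * ∫ t, (∫ w, g (w, t) ∂μ) ∂ν := by
        rw [← hswap]; exact integral_const_mul _ _
    _ ≤ 2 * R * ((1 - ((n:ℝ)+1)/p)⁻¹ * K) := by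
        rw [← step3]
        exact mul_le_mul_of_nonneg_left step2 (by linarith)
    _ = 2 * R * (1 - ((n:ℝ)+1)/p)⁻¹ * MB ^ (1 - 1/p) * I ^ (1/p) := by
        rw [hK]; ring

/-- The Morrey-type pointwise estimate behind Ancona's Hardy inequality:
for `p > N` (`N = n + 1 ≥ 1`) and `u ∈ C_c^∞(Ω)` (extended by zero),
`|u x|` is controlled by `δ(x)^{1 - N/p}` times the `L^p` norm of `∇u`
over the ball `B(x, 2δ(x))`, with a constant depending only on `N` and `p`. -/
theorem morrey_pointwise_estimate (n : ℕ) (p : ℝ) (hp : (n + 1 : ℝ) < p) :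
    ∃ C : ℝ, ∀ Ω : Set (EuclideanSpace ℝ (Fin (n + 1))),
      IsOpen Ω → Ω.Nonempty → Ω ≠ Set.univ →
      ∀ u : EuclideanSpace ℝ (Fin (n + 1)) → ℝ,
        ContDiff ℝ (⊤ : ℕ∞) u → HasCompactSupport u → tsupport u ⊆ Ω →
        ∀ x ∈ Ω,
          |u x| ≤ C * Metric.infDist x (frontier Ω) ^ (1 - (n + 1 : ℝ) / p) *
            (∫ y in Metric.ball x (2 * Metric.infDist x (frontier Ω)),
              ‖fderiv ℝ u y‖ ^ p) ^ (1 / p) := by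
  have hp1 : (1:ℝ) < p := lt_of_le_of_lt (by simp [le_add_iff_nonneg_left]) hp
  have hp0 : (0:ℝ) < p := lt_trans zero_lt_one hp1
  have hA : (0:ℝ) < 1 - ((n:ℝ)+1)/p := by
    have : ((n:ℝ)+1)/p < 1 := (div_lt_one hp0).mpr hp
    linarith
  set ω : ℝ := (volume (ball (0 : EuclideanSpace ℝ (Fin (n+1))) 1)).toReal with hω
  have hωpos : 0 < ω :=
    ENNReal.toReal_pos (measure_ball_pos volume _ one_pos).ne' measure_ball_lt_top.ne
  refine ⟨8 * (1 - ((n:ℝ)+1)/p)⁻¹ * ω ^ (-(1/p)) * 2 ^ (-(((n:ℝ)+1)/p)), ?_⟩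
  intro Ω hΩ hne hneq u hu hcsu hsupp x hx
  -- the frontier is nonempty and the distance is positive
  have hfr : (frontier Ω).Nonempty := by
    rcases eq_empty_or_nonempty (frontier Ω) with h | h
    · rcases frontier_eq_empty_iff.mp h with h' | h'
      · exact absurd h' (Set.nonempty_iff_ne_empty.mp hne)
      · exact absurd h' hneq
    · exact h
  have hxfr : x ∉ frontier Ω := fun h => (hΩ.frontier_eq ▸ h).2 hx
  obtain ⟨z, hzfr, hzd⟩ := isClosed_frontier.exists_infDist_eq_dist hfr x
  set δ : ℝ := Metric.infDist x (frontier Ω) with hδ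
  have hδpos : 0 < δ := by
    rw [hzd]
    exact dist_pos.mpr (fun h => hxfr (h ▸ hzfr))
  have huz : u z = 0 := by
    apply image_eq_zero_of_notMem_tsupport
    intro hz
    exact ((hΩ.frontier_eq ▸ hzfr).2) (hsupp hz)
  set R : ℝ := 2 * δ with hR'
  have hR : 0 < R := by positivity
  set I : ℝ := ∫ y in ball x R, ‖fderiv ℝ u y‖ ^ p with hI
  have hInn : 0 ≤ I :=
    setIntegral_nonneg measurableSet_ball fun y _ => Real.rpow_nonneg (norm_nonneg _) _
  have hIpnn : 0 ≤ I ^ (1/p) := Real.rpow_nonneg hInn _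
  set MB : ℝ := (volume (ball x R)).toReal with hMB
  have hMBpos : 0 < MB :=
    ENNReal.toReal_pos (measure_ball_pos volume _ hR).ne' measure_ball_lt_top.ne
  -- the two Morrey averages
  have key1 := key_avg p hp u hu hcsu x x R hR (by simp [hR.le])
  have key2 := key_avg p hp u hu hcsu x z R hR
    (by rw [dist_comm, ← hzd]; rw [hR']; linarith)
  -- split via the average
  haveI : IsFiniteMeasure (volume.restrict (ball x R)) :=
    ⟨by rw [Measure.restrict_apply_univ]; exact measure_ball_lt_top⟩
  have hu_int : IntegrableOn u (ball x R) volume :=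
    (hu.continuous.integrable_of_hasCompactSupport hcsu).integrableOn
  have habs1 : IntegrableOn (fun w => u x - u w) (ball x R) volume :=
    (integrable_const (u x)).sub hu_int
  have habs2 : IntegrableOn (fun w => u w - u z) (ball x R) volume :=
    hu_int.sub (integrable_const (u z))
  have hsplit : MB * u x = (∫ w in ball x R, (u x - u w)) +
      (∫ w in ball x R, (u w - u z)) := by
    rw [integral_sub (integrable_const (u x)) hu_int,
      integral_sub hu_int (integrable_const (u z)), setIntegral_const, setIntegral_const, huz]
    simp only [smul_eq_mul, mul_zero, sub_zero, Measure.real]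
    ring
  have hbound : MB * |u x| ≤
      (∫ w in ball x R, |u x - u w|) + (∫ w in ball x R, |u z - u w|) := by
    have h1 : |MB * u x| = MB * |u x| := by
      rw [abs_mul, abs_of_pos hMBpos]
    rw [← h1, hsplit]
    have hn1 : ‖∫ w in ball x R, (u x - u w)‖ ≤ ∫ w in ball x R, ‖u x - u w‖ :=
      norm_integral_le_integral_norm _
    have hn2 : ‖∫ w in ball x R, (u w - u z)‖ ≤ ∫ w in ball x R, ‖u w - u z‖ :=
      norm_integral_le_integral_norm _
    simp only [Real.norm_eq_abs] at hn1 hn2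
    calc |(∫ w in ball x R, (u x - u w)) + (∫ w in ball x R, (u w - u z))|
        ≤ |∫ w in ball x R, (u x - u w)| + |∫ w in ball x R, (u w - u z)| := abs_add_le _ _
      _ ≤ (∫ w in ball x R, |u x - u w|) + (∫ w in ball x R, |u w - u z|) :=
          add_le_add hn1 hn2
      _ = (∫ w in ball x R, |u x - u w|) + (∫ w in ball x R, |u z - u w|) := by
          congr 1
          exact integral_congr_ae (Filter.Eventually.of_forall fun w => abs_sub_comm _ _)
  have hMB2 : MB * |u x| ≤ 4 * R * (1 - ((n:ℝ)+1)/p)⁻¹ * MB ^ (1 - 1/p) * I ^ (1/p) := by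
    calc MB * |u x| ≤ _ := hbound
      _ ≤ 2 * R * (1 - ((n:ℝ)+1)/p)⁻¹ * MB ^ (1 - 1/p) * I ^ (1/p) +
          2 * R * (1 - ((n:ℝ)+1)/p)⁻¹ * MB ^ (1 - 1/p) * I ^ (1/p) := add_le_add key1 key2
      _ = _ := by ring
  -- volume of the ball
  have hMBball : MB = R ^ (n+1) * ω := by
    rw [hMB, Measure.addHaar_ball _ _ hR.le, ENNReal.toReal_mul,
      ENNReal.toReal_ofReal (by positivity), finrank_euclideanSpace_fin, hω]
  have hMBsplit : MB ^ (1 - 1/p : ℝ) = MB * MB ^ (-(1/p) : ℝ) := by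
    rw [show (1 - 1/p : ℝ) = 1 + (-(1/p)) from by ring, Real.rpow_add hMBpos,
      Real.rpow_one]
  have hux : |u x| ≤ 4 * R * (1 - ((n:ℝ)+1)/p)⁻¹ * MB ^ (-(1/p) : ℝ) * I ^ (1/p) := by
    rw [hMBsplit] at hMB2
    have h2 : MB * |u x| ≤
        MB * (4 * R * (1 - ((n:ℝ)+1)/p)⁻¹ * MB ^ (-(1/p) : ℝ) * I ^ (1/p)) :=
      hMB2.trans_eq (by ring)
    exact le_of_mul_le_mul_left h2 hMBpos
  have hMBr : MB ^ (-(1/p):ℝ) =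
      (2:ℝ) ^ (-(((n:ℝ)+1)/p)) * δ ^ (-(((n:ℝ)+1)/p)) * ω ^ (-(1/p):ℝ) := by
    rw [hMBball, hR', Real.mul_rpow (by positivity) hωpos.le, mul_pow,
      Real.mul_rpow (by positivity) (by positivity)]
    congr 1
    congr 1
    · rw [← Real.rpow_natCast (2:ℝ) (n+1), ← Real.rpow_mul (by norm_num)]
      congr 1
      push_cast
      ring
    · rw [← Real.rpow_natCast δ (n+1), ← Real.rpow_mul hδpos.le]
      congr 1
      push_cast
      ring
  have hδcomb : δ ^ (1 - ((n:ℝ)+1)/p) = δ * δ ^ (-(((n:ℝ)+1)/p)) := by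
    rw [show (1 - ((n:ℝ)+1)/p) = 1 + (-(((n:ℝ)+1)/p)) from by ring,
      Real.rpow_add hδpos, Real.rpow_one]
  calc |u x| ≤ 4 * R * (1 - ((n:ℝ)+1)/p)⁻¹ * MB ^ (-(1/p) : ℝ) * I ^ (1/p) := hux
    _ = 8 * (1 - ((n:ℝ)+1)/p)⁻¹ * ω ^ (-(1/p)) * 2 ^ (-(((n:ℝ)+1)/p)) *
        δ ^ (1 - ((n:ℝ)+1)/p) * I ^ (1/p) := by
      rw [hMBr, hR', hδcomb]
      ring
end
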